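/- Let η be an ordinal and α = ω^η (ordinal exponentiation). Then any filter F on α all of whose elements have order type α can be extended to an ultrafilter D on α all of whose elements have order type α. -/

import Mathlib

/-- `z` is an `E`-accumulation point of the `I`-indexed sequence `x`. -/
def IsAccPt {I X : Type*} [TopologicalSpace X] (E : Set (Set I)) (x : I → X) (z : X) : Prop :=
  ∀ U : Set X, IsOpen U → z ∈ U → {i | x i ∈ U} ∈ E

/-- `X` satisfies the `E`-accumulation property. -/
def AccProp {I : Type*} (X : Type*) [TopologicalSpace X] (E : Set (Set I)) : Prop :=
  ∀ x : I → X, ∃ z : X, IsAccPt E x z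

/-- A filter in the classical sense: a nonempty proper family closed under
finite intersections and supersets. -/
structure IsSetFilter {I : Type*} (F : Set (Set I)) : Prop where
  nonempty : F.Nonempty
  proper : (∅ : Set I) ∉ F
  inter : ∀ A ∈ F, ∀ B ∈ F, A ∩ B ∈ F
  mono : ∀ A ∈ F, ∀ B : Set I, A ⊆ B → B ∈ F

/-- A (set-)ultrafilter: a filter containing one of `J`, `Jᶜ` for every `J`. -/
def IsSetUltrafilter {I : Type*} (F : Set (Set I)) : Prop :=
  IsSetFilter F ∧ ∀ J : Set I, J ∈ F ∨ Jᶜ ∈ F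

/-- The order type of a subset of a well-ordered type, with the inherited order. -/
noncomputable def setOType {β : Type*} [LinearOrder β] [WellFoundedLT β] (S : Set β) : Ordinal :=
  Ordinal.type ((· < ·) : S → S → Prop)

/-- `X` satisfies the `α`-complete accumulation property `CAP*_α`: every `α`-indexed
sequence has a point all of whose open neighborhoods pick out a set of indices of
order type `α`. -/
def CAPstar (α : Ordinal) (X : Type*) [TopologicalSpace X] : Prop :=
  ∀ x : α.ToType → X, ∃ z : X, ∀ U : Set X, IsOpen U → z ∈ U →
    setOType {γ : α.ToType | x γ ∈ U} = α

/-!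
Sets of order type `< ω ^ η` form an ideal. Counting, below each point `x` of `A ∪ B`, the
elements of `A` and of `B` gives a strictly increasing map
`x ↦ setOType (A ∩ Iio x) ♯ setOType (B ∩ Iio x)` into the ordinals, so the order type of
`A ∪ B` is at most the Hessenberg natural sum of those of `A` and `B`; and `ω ^ η` is closed
under natural sums (write ordinals in base `ω ^ e` and recurse on the exponent). Hence the sets
whose complement has order type `< ω ^ η` form a filter meeting every member of `F`, and an
ultrafilter refining both contains no set of smaller order type.
-/

open Ordinal Set Order Filter

universe u

namespace Ordinal

noncomputable def nadd : Ordinal.{u} → Ordinal.{u} → Ordinal.{u}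
  | a, b => max (⨆ x : Iio a, succ (nadd x.1 b)) (⨆ x : Iio b, succ (nadd a x.1))
termination_by a b => (a, b)
decreasing_by all_goals cases x; decreasing_tactic

infixl:65 " ♯ " => nadd

theorem nadd_le_iff {a b c : Ordinal.{u}} :
    a ♯ b ≤ c ↔ (∀ a' < a, a' ♯ b < c) ∧ ∀ b' < b, a ♯ b' < c := by
  rw [nadd, max_le_iff, Ordinal.iSup_le_iff, Ordinal.iSup_le_iff]
  simp

theorem nadd_lt_nadd_right {a' a : Ordinal} (h : a' < a) (b : Ordinal) : a' ♯ b < a ♯ b :=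
  (nadd_le_iff.1 le_rfl).1 a' h

theorem nadd_lt_nadd_left {b' b : Ordinal} (h : b' < b) (a : Ordinal) : a ♯ b' < a ♯ b :=
  (nadd_le_iff.1 le_rfl).2 b' h

theorem nadd_le_nadd_left {b' b : Ordinal} (h : b' ≤ b) (a : Ordinal) : a ♯ b' ≤ a ♯ b :=
  StrictMono.monotone (fun _ _ h ↦ nadd_lt_nadd_left h a) h

theorem nadd_le_nadd_right {a' a : Ordinal} (h : a' ≤ a) (b : Ordinal) : a' ♯ b ≤ a ♯ b :=
  StrictMono.monotone (fun _ _ h ↦ nadd_lt_nadd_right h b) h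

theorem natCast_nadd_natCast_le (m n : ℕ) :
    (m : Ordinal) ♯ n ≤ ((m + n : ℕ) : Ordinal) := by
  induction hk : m + n using Nat.strong_induction_on generalizing m n with
  | _ k ih =>
  refine nadd_le_iff.2 ⟨fun a ha ↦ ?_, fun b hb ↦ ?_⟩
  · obtain ⟨m', rfl⟩ := lt_omega0.1 (ha.trans (natCast_lt_omega0 m))
    have hm : m' < m := by exact_mod_cast ha
    exact (ih _ (by omega) m' n rfl).trans_lt (by exact_mod_cast (by omega : m' + n < k))
  · obtain ⟨n', rfl⟩ := lt_omega0.1 (hb.trans (natCast_lt_omega0 n))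
    have hn : n' < n := by exact_mod_cast hb
    exact (ih _ (by omega) m n' rfl).trans_lt (by exact_mod_cast (by omega : m + n' < k))

theorem nadd_lt_omega0 {a b : Ordinal} (ha : a < ω) (hb : b < ω) : a ♯ b < ω := by
  obtain ⟨m, rfl⟩ := lt_omega0.1 ha
  obtain ⟨n, rfl⟩ := lt_omega0.1 hb
  exact (natCast_nadd_natCast_le m n).trans_lt (natCast_lt_omega0 _)

theorem div_lt_or_div_eq_and_mod_lt {a' a : Ordinal} (h : a' < a) (c : Ordinal) :
    a' / c < a / c ∨ a' / c = a / c ∧ a' % c < a % c := by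
  rcases (div_le_left h.le c).lt_or_eq with hq | hq
  · exact Or.inl hq
  · refine Or.inr ⟨hq, ?_⟩
    rw [← div_add_mod a' c, ← div_add_mod a c, hq] at h
    exact lt_of_add_lt_add_left h

theorem mul_add_lt_mul_add {c x' x y' y : Ordinal} (hy' : y' < c)
    (h : x' < x ∨ x' = x ∧ y' < y) : c * x' + y' < c * x + y := by
  rcases h with hx | ⟨rfl, hy⟩
  · calc c * x' + y' < c * x' + c := add_lt_add_right hy' _
      _ = c * succ x' := (mul_succ c x').symm
      _ ≤ c * x := mul_le_mul_right (succ_le_of_lt hx) c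
      _ ≤ c * x + y := le_self_add
  · exact add_lt_add_right hy _

theorem nadd_le_mul_div_nadd_add_mod_nadd {c : Ordinal} (hc : ∀ r < c, ∀ s < c, r ♯ s < c)
    (a b : Ordinal) : a ♯ b ≤ c * (a / c ♯ b / c) + (a % c ♯ b % c) := by
  rcases eq_or_ne c 0 with rfl | hc0
  · simp
  induction a using WellFoundedLT.induction generalizing b with | ind a iha =>
  induction b using WellFoundedLT.induction with | ind b ihb =>
  refine nadd_le_iff.2 ⟨fun a' ha' ↦ ?_, fun b' hb' ↦ ?_⟩
  · refine (iha a' ha' b).trans_lt (mul_add_lt_mul_add (hc _ (mod_lt a' hc0) _ (mod_lt b hc0)) ?_)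
    rcases div_lt_or_div_eq_and_mod_lt ha' c with hq | ⟨hq, hr⟩
    · exact Or.inl (nadd_lt_nadd_right hq _)
    · exact Or.inr ⟨by rw [hq], nadd_lt_nadd_right hr _⟩
  · refine (ihb b' hb').trans_lt (mul_add_lt_mul_add (hc _ (mod_lt a hc0) _ (mod_lt b' hc0)) ?_)
    rcases div_lt_or_div_eq_and_mod_lt hb' c with hq | ⟨hq, hr⟩
    · exact Or.inl (nadd_lt_nadd_left hq _)
    · exact Or.inr ⟨by rw [hq], nadd_lt_nadd_left hr _⟩

theorem nadd_lt_omega0_opow {η a b : Ordinal} (ha : a < ω ^ η) (hb : b < ω ^ η) :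
    a ♯ b < ω ^ η := by
  induction η using WellFoundedLT.induction generalizing a b with | ind η ih =>
  rcases zero_or_succ_or_isSuccLimit η with rfl | ⟨e, rfl⟩ | hη
  · simp only [opow_zero, lt_one_iff] at ha hb ⊢
    subst ha hb
    exact nonpos_iff_eq_zero.1 (nadd_le_iff.2 ⟨by simp, by simp⟩)
  · have hc0 : ω ^ e ≠ 0 := opow_ne_zero _ omega0_ne_zero
    have hc : ∀ r < ω ^ e, ∀ s < ω ^ e, r ♯ s < ω ^ e :=
      fun r hr s hs ↦ ih e (lt_succ e) hr hs
    have hq : ∀ x < ω ^ succ e, x / ω ^ e < ω := fun x hx ↦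
      (lt_mul_iff_div_lt hc0).1 (by rwa [← opow_succ])
    calc a ♯ b ≤ ω ^ e * (a / ω ^ e ♯ b / ω ^ e) + (a % ω ^ e ♯ b % ω ^ e) :=
          nadd_le_mul_div_nadd_add_mod_nadd hc a b
      _ < ω ^ e * succ (a / ω ^ e ♯ b / ω ^ e) := by
          rw [mul_succ]
          exact add_lt_add_right (hc _ (mod_lt a hc0) _ (mod_lt b hc0)) _
      _ ≤ ω ^ e * ω := mul_le_mul_right (succ_le_of_lt (nadd_lt_omega0 (hq a ha) (hq b hb))) _
      _ = ω ^ succ e := (opow_succ ω e).symm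
  · obtain ⟨e₁, he₁, ha₁⟩ := (lt_opow_of_isSuccLimit omega0_ne_zero hη).1 ha
    obtain ⟨e₂, he₂, hb₂⟩ := (lt_opow_of_isSuccLimit omega0_ne_zero hη).1 hb
    have he : max e₁ e₂ < η := max_lt he₁ he₂
    refine (ih _ he (ha₁.trans_le ?_) (hb₂.trans_le ?_)).trans
      ((opow_lt_opow_iff_right one_lt_omega0).2 he)
    · exact opow_le_opow_right omega0_pos (le_max_left _ _)
    · exact opow_le_opow_right omega0_pos (le_max_right _ _)

end Ordinal

section setOType

variable {β : Type*} [LinearOrder β] [WellFoundedLT β]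

theorem setOType_mono {S T : Set β} (h : S ⊆ T) : setOType S ≤ setOType T :=
  RelEmbedding.ordinal_type_le ⟨⟨inclusion h, inclusion_injective h⟩, Iff.rfl⟩

theorem setOType_le_type (S : Set β) : setOType S ≤ typeLT β :=
  RelEmbedding.ordinal_type_le ⟨⟨Subtype.val, Subtype.val_injective⟩, Iff.rfl⟩

theorem setOType_inter_Iio_lt {S : Set β} {x : β} (hx : x ∈ S) :
    setOType (S ∩ Iio x) < setOType S :=
  calc setOType (S ∩ Iio x) = typein (α := S) (· < ·) ⟨x, hx⟩ :=
        type_eq.2 ⟨{ toFun z := ⟨⟨z.1, z.2.1⟩, z.2.2⟩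
                     invFun z := ⟨z.1.1, z.1.2, z.2⟩
                     map_rel_iff' := Iff.rfl }⟩
    _ < setOType S := typein_lt_type _ _

theorem type_le_of_strictMono {γ : Type u} [LinearOrder γ] [WellFoundedLT γ]
    {f : γ → Ordinal.{u}} {c : Ordinal.{u}} (hf : StrictMono f) (hc : ∀ x, f x < c) :
    typeLT γ ≤ c := by
  have e := (OrderEmbedding.ofStrictMono (fun x ↦ (⟨f x, hc x⟩ : Iio c)) hf).ltEmbedding
  simpa using lift_type_le.{u, u + 1, u + 1}.2 ⟨e.collapse⟩

theorem setOType_union_le_nadd (A B : Set β) :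
    setOType (A ∪ B) ≤ setOType A ♯ setOType B := by
  have hlt {S : Set β} {x y : β} (hx : x ∈ S) (hxy : x < y) :
      setOType (S ∩ Iio x) < setOType (S ∩ Iio y) := by
    simpa [inter_assoc, min_eq_right hxy.le] using
      setOType_inter_Iio_lt (S := S ∩ Iio y) ⟨hx, hxy⟩
  have hle {S : Set β} {x y : β} (hxy : x ≤ y) :
      setOType (S ∩ Iio x) ≤ setOType (S ∩ Iio y) :=
    setOType_mono (inter_subset_inter_right S (Iio_subset_Iio hxy))
  refine type_le_of_strictMono
    (f := fun x : ↥(A ∪ B) ↦ setOType (A ∩ Iio x.1) ♯ setOType (B ∩ Iio x.1)) ?_ ?_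
  · rintro ⟨x, hxA | hxB⟩ ⟨y, -⟩ (hxy : x < y)
    · exact (nadd_lt_nadd_right (hlt hxA hxy) _).trans_le (nadd_le_nadd_left (hle hxy.le) _)
    · exact (nadd_le_nadd_right (hle hxy.le) _).trans_lt (nadd_lt_nadd_left (hlt hxB hxy) _)
  · rintro ⟨x, hxA | hxB⟩
    · exact (nadd_lt_nadd_right (setOType_inter_Iio_lt hxA) _).trans_le
        (nadd_le_nadd_left (setOType_mono inter_subset_left) _)
    · exact (nadd_le_nadd_right (setOType_mono inter_subset_left) _).trans_lt
        (nadd_lt_nadd_left (setOType_inter_Iio_lt hxB) _)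

theorem setOType_union_lt_omega0_opow {η : Ordinal} {A B : Set β} (hA : setOType A < ω ^ η)
    (hB : setOType B < ω ^ η) : setOType (A ∪ B) < ω ^ η :=
  (setOType_union_le_nadd A B).trans_lt (nadd_lt_omega0_opow hA hB)

end setOType

def IsSetFilter.toFilter {I : Type*} {F : Set (Set I)} (hF : IsSetFilter F) : Filter I where
  sets := F
  univ_sets := let ⟨A, hA⟩ := hF.nonempty; hF.mono A hA univ (subset_univ A)
  sets_of_superset hA hAB := hF.mono _ hA _ hAB
  inter_sets hA hB := hF.inter _ hA _ hB

theorem Ultrafilter.isSetUltrafilter {I : Type*} (U : Ultrafilter I) :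
    IsSetUltrafilter {S | S ∈ U} :=
  ⟨⟨⟨univ, univ_mem⟩, U.empty_notMem, fun _ hA _ hB ↦ inter_mem hA hB,
    fun _ hA _ hAB ↦ mem_of_superset hA hAB⟩, U.mem_or_compl_mem⟩

theorem exists_isSetUltrafilter_setOType_eq {β : Type*} [LinearOrder β] [WellFoundedLT β]
    {c : Ordinal} (hc : typeLT β = c)
    (hunion : ∀ A B : Set β, setOType A < c → setOType B < c → setOType (A ∪ B) < c)
    {F : Set (Set β)} (hF : IsSetFilter F) (hunif : ∀ S ∈ F, setOType S = c) :
    ∃ D : Set (Set β), IsSetUltrafilter D ∧ F ⊆ D ∧ ∀ S ∈ D, setOType S = c := by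
  subst hc
  have hempty : setOType (∅ : Set β) < typeLT β := by
    obtain ⟨S, hS⟩ := hF.nonempty
    obtain ⟨x, hx⟩ := nonempty_iff_ne_empty.2 fun h ↦ hF.proper (h ▸ hS)
    calc setOType ∅ ≤ setOType (S ∩ Iio x) := setOType_mono (empty_subset _)
      _ < setOType S := setOType_inter_Iio_lt hx
      _ = typeLT β := hunif S hS
  let coSmall : Filter β := comk (setOType · < typeLT β) hempty
    (fun _ hT _ hST ↦ (setOType_mono hST).trans_lt hT) fun A hA B hB ↦ hunion A B hA hB
  have : (hF.toFilter ⊓ coSmall).NeBot := by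
    refine inf_neBot_iff.2 fun S hS T hT ↦ not_disjoint_iff_nonempty_inter.1 fun hST ↦ ?_
    exact ((hunif S hS).symm.le.trans (setOType_mono hST.subset_compl_right)).not_gt hT
  let U := Ultrafilter.of (hF.toFilter ⊓ coSmall)
  refine ⟨{S | S ∈ U}, U.isSetUltrafilter,
    fun S hS ↦ Ultrafilter.of_le _ (mem_inf_of_left hS), fun S hS ↦ ?_⟩
  refine (setOType_le_type S).antisymm (not_lt.1 fun hlt ↦ ?_)
  have hSc : Sᶜ ∈ U := Ultrafilter.of_le _ (mem_inf_of_right (by simpa [coSmall] using hlt))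
  exact U.compl_notMem_iff.2 hS hSc

theorem stmt9 (η : Ordinal) (α : Ordinal) (hα : α = Ordinal.omega0 ^ η)
    (F : Set (Set α.ToType)) (hF : IsSetFilter F)
    (hunif : ∀ S ∈ F, setOType S = α) :
    ∃ D : Set (Set α.ToType), IsSetUltrafilter D ∧ F ⊆ D ∧
      ∀ S ∈ D, setOType S = α := by
  subst hα
  exact exists_isSetUltrafilter_setOType_eq (type_toType _)
    (fun _ _ ↦ setOType_union_lt_omega0_opow) hF hunif
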